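/- Regarded as a preferential model for PDL, the model W_⊛ over N = {p} with three states labelled by X_p = {v_p}, X_p̄ = {v_p̄}, X_pp̄ = {v_p, v_p̄} (where v_p(p)=1, v_p̄(p)=0) and order X_pp̄ ≺ X_p, X_pp̄ ≺ X_p̄ violates the rule (Or) for dependence-atom formulas: =(p) ⊢_{W_⊛} =(p) holds, but =(p) ∨ =(p) ⊬_{W_⊛} =(p); concretely, min(⟦=(p) ∨ =(p)⟧, ≺) = {X_pp̄} and X_pp̄ ⊭ =(p). -/
import Mathlib


/-- PDL-formulas in negation normal form over variables `V`, including
dependence atoms; `dep [] p` is the constancy atom `=(p)`.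
Here `V = Unit` models the single variable `p`. -/
inductive PDL (V : Type) : Type
  | pos : V → PDL V
  | neg : V → PDL V
  | bot : PDL V
  | top : PDL V
  | dep : List V → V → PDL V
  | conj : PDL V → PDL V → PDL V
  | disj : PDL V → PDL V → PDL V

/-- Team semantics of PDL-formulas. -/
def PDL.tsat {V : Type} : PDL V → Set (V → Bool) → Prop
  | .pos p, X => ∀ v ∈ X, v p = true
  | .neg p, X => ∀ v ∈ X, v p = false
  | .bot, X => X = ∅
  | .top, _ => True
  | .dep as b, X => ∀ v ∈ X, ∀ v' ∈ X, (∀ a ∈ as, v a = v' a) → v b = v' b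
  | .conj φ ψ, X => PDL.tsat φ X ∧ PDL.tsat ψ X
  | .disj φ ψ, X => ∃ Y Z : Set (V → Bool), X = Y ∪ Z ∧ PDL.tsat φ Y ∧ PDL.tsat ψ Z

/-- The valuation `v_p` with `v_p(p) = 1`. -/
def vp : Unit → Bool := fun _ => true

/-- The valuation `v_p̄` with `v_p̄(p) = 0`. -/
def vn : Unit → Bool := fun _ => false

/-- The three states of the model `W_⊛`. -/
inductive St : Type
  | sp : St   -- labelled by `X_p = {v_p}`
  | sn : St   -- labelled by `X_p̄ = {v_p̄}`
  | sb : St   -- labelled by `X_pp̄ = {v_p, v_p̄}`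
deriving DecidableEq

/-- The labelling of `W_⊛`. -/
def lab : St → Set (Unit → Bool)
  | .sp => {vp}
  | .sn => {vn}
  | .sb => {vp, vn}

/-- The strict order of `W_⊛`: `X_pp̄ ≺ X_p` and `X_pp̄ ≺ X_p̄`. -/
def stlt : St → St → Prop := fun s t => s = .sb ∧ (t = .sp ∨ t = .sn)

/-- `s` is a `≺`-minimal state of `W_⊛` among those satisfying `φ`. -/
def minSt (φ : PDL Unit) (s : St) : Prop :=
  PDL.tsat φ (lab s) ∧ ∀ s', PDL.tsat φ (lab s') → ¬ stlt s' s

/-- Preferential entailment `φ ⊢_{W_⊛} ψ`. -/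
def entSt (φ ψ : PDL Unit) : Prop :=
  ∀ s, minSt φ s → PDL.tsat ψ (lab s)

/-- `min(⟦φ⟧, ≺)` in `W_⊛`. -/
def minTeams (φ : PDL Unit) : Set (Set (Unit → Bool)) :=
  {X | ∃ s, minSt φ s ∧ lab s = X}

/-- The constancy atom `=(p)`. -/
def conP : PDL Unit := .dep [] ()

lemma sb_tsat_disj : PDL.tsat (.disj conP conP) (lab .sb) := by
  refine ⟨{vp}, {vn}, rfl, ?_, ?_⟩ <;>
  · intro v hv v' hv' _
    simp_all [Set.mem_singleton_iff]

lemma sb_not_conP : ¬ PDL.tsat conP (lab .sb) := by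
  intro h
  have := h vp (by left; rfl) vn (by right; rfl) (by simp)
  simp [vp, vn] at this

lemma minSt_disj_sb : minSt (.disj conP conP) .sb := by
  refine ⟨sb_tsat_disj, ?_⟩
  rintro s' _ ⟨h1, h2⟩
  rcases h2 with h | h <;> simp at h

lemma minSt_disj_iff (s : St) : minSt (.disj conP conP) s ↔ s = .sb := by
  constructor
  · rintro ⟨h1, h2⟩
    cases s with
    | sb => rfl
    | sp => exact absurd (h2 .sb sb_tsat_disj ⟨rfl, Or.inl rfl⟩) (fun h => h)
    | sn => exact absurd (h2 .sb sb_tsat_disj ⟨rfl, Or.inr rfl⟩) (fun h => h)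
  · rintro rfl; exact minSt_disj_sb

/-- Regarded as a preferential model for PDL, `W_⊛` violates (Or):
`=(p) ⊢_{W_⊛} =(p)` but `=(p) ∨ =(p) ⊬_{W_⊛} =(p)`; concretely,
`min(⟦=(p) ∨ =(p)⟧, ≺) = {X_pp̄}` and `X_pp̄ ⊭ =(p)`. -/
theorem PDL_W_star_violates_Or :
    entSt conP conP ∧
    ¬ entSt (.disj conP conP) conP ∧
    minTeams (.disj conP conP) = {lab .sb} ∧
    ¬ PDL.tsat conP (lab .sb) := by
  refine ⟨?_, ?_, ?_, sb_not_conP⟩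
  · intro s hs; exact hs.1
  · intro h
    exact sb_not_conP (h .sb minSt_disj_sb)
  · ext X
    simp only [minTeams, Set.mem_setOf_eq, Set.mem_singleton_iff]
    constructor
    · rintro ⟨s, hs, rfl⟩
      rw [minSt_disj_iff] at hs; rw [hs]
    · rintro rfl; exact ⟨.sb, minSt_disj_sb, rfl⟩
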